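/- Let Q be an M×M substochastic matrix and R an M×K matrix with [Q R] row-stochastic, and suppose there exist τ ≥ 0 and ε > 0 such that every row of Q^τ R has L1-norm at least ε. Then the map F(P) = QP + R on M×K real matrices has a unique fixed point P*, and for any initial matrix P₀, the iterates P_{i+1} = Q P_i + R converge to P* as i → ∞. -/

import Mathlib

open Finset Matrix Filter Topology NNReal Function

/-! Row-stochasticity of `[Q R]` gives `rowsum (Q^(τ+1)) = rowsum (Q^τ) - rowsum (Q^τ R) ≤ 1 - ε`,
so `Q^(τ+1)` has ∞-operator norm `< 1`. As `F^[k] X - F^[k] Y = Q^k (X - Y)`, the iterate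
`F^[τ+1]` is a contraction, whose fixed point is the unique fixed point of `F`; and `‖Q^k‖ < 1`
forces `Q^n → 0`, hence `F^[n] X - P* = Q^n (X - P*) → 0`. -/

theorem tendsto_pow_atTop_nhds_zero_of_norm_pow_lt_one {R : Type*} [SeminormedRing R] {a : R}
    {k : ℕ} (hk : k ≠ 0) (h : ‖a ^ k‖ < 1) : Tendsto (fun n ↦ a ^ n) atTop (𝓝 0) := by
  set C := ∑ r ∈ range k, ‖a ^ r‖
  have hbound (n : ℕ) : ‖a ^ n‖ ≤ C * ‖(a ^ k) ^ (n / k)‖ := calc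
    ‖a ^ n‖ = ‖a ^ (n % k) * (a ^ k) ^ (n / k)‖ := by rw [← pow_mul, ← pow_add, Nat.mod_add_div]
    _ ≤ ‖a ^ (n % k)‖ * ‖(a ^ k) ^ (n / k)‖ := norm_mul_le _ _
    _ ≤ C * ‖(a ^ k) ^ (n / k)‖ := by
      gcongr
      exact single_le_sum (f := fun r ↦ ‖a ^ r‖) (fun _ _ ↦ norm_nonneg _)
        (mem_range.2 (Nat.mod_lt n (Nat.pos_of_ne_zero hk)))
  have hlim : Tendsto (fun n ↦ (a ^ k) ^ (n / k)) atTop (𝓝 0) :=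
    (tendsto_pow_atTop_nhds_zero_of_norm_lt_one h).comp (Nat.tendsto_div_const_atTop hk)
  refine squeeze_zero_norm hbound ?_
  simpa using (tendsto_zero_iff_norm_tendsto_zero.1 hlim).const_mul C

namespace Matrix

variable {l m n p α : Type*} [Fintype m]

theorem sum_mul_apply [Fintype n] [NonUnitalNonAssocSemiring α] (A : Matrix l m α)
    (B : Matrix m n α) (i : l) : ∑ j, (A * B) i j = ∑ k, A i k * ∑ j, B k j := by
  simp only [mul_apply, mul_sum]
  exact sum_comm

theorem sum_mul_add_sum_mul [Fintype n] [Fintype p] [NonAssocSemiring α] {Q : Matrix m n α}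
    {R : Matrix m p α} (hrow : ∀ i, ∑ j, Q i j + ∑ k, R i k = 1) (A : Matrix l m α) (i : l) :
    ∑ j, (A * Q) i j + ∑ k, (A * R) i k = ∑ k, A i k := by
  simp only [sum_mul_apply, ← sum_add_distrib, ← mul_add, hrow, mul_one]

theorem iterate_mul_add_sub_iterate [DecidableEq m] [Ring α] (Q : Matrix m m α)
    (R : Matrix m n α) (k : ℕ) (X Y : Matrix m n α) :
    (fun X ↦ Q * X + R)^[k] X - (fun X ↦ Q * X + R)^[k] Y = Q ^ k * (X - Y) := by
  induction k with
  | zero => simp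
  | succ k ih =>
    rw [iterate_succ_apply', iterate_succ_apply', add_sub_add_right_eq_sub, ← Matrix.mul_sub, ih,
      ← Matrix.mul_assoc, ← pow_succ']

section Substochastic

variable [Semiring α] [PartialOrder α] [IsOrderedRing α]

theorem mul_apply_nonneg {A : Matrix l m α} {B : Matrix m n α} (hA : ∀ i j, 0 ≤ A i j)
    (hB : ∀ i j, 0 ≤ B i j) (i : l) (j : n) : 0 ≤ (A * B) i j :=
  sum_nonneg fun k _ ↦ mul_nonneg (hA i k) (hB k j)

variable [DecidableEq m] {Q : Matrix m m α}

theorem sum_pow_apply_le_one (hQ0 : ∀ i j, 0 ≤ Q i j) (hQ1 : ∀ i, ∑ j, Q i j ≤ 1) (k : ℕ)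
    (i : m) : ∑ j, (Q ^ k) i j ≤ 1 := by
  induction k generalizing i with
  | zero => simp [one_apply]
  | succ k ih => calc
    ∑ j, (Q ^ (k + 1)) i j = ∑ l, (Q ^ k) i l * ∑ j, Q l j := by rw [pow_succ, sum_mul_apply]
    _ ≤ ∑ l, (Q ^ k) i l :=
      sum_le_sum fun l _ ↦ mul_le_of_le_one_right (pow_apply_nonneg hQ0 k i l) (hQ1 l)
    _ ≤ 1 := ih i

theorem sum_pow_succ_apply_add_le_one [Fintype n] {R : Matrix m n α} (hQ0 : ∀ i j, 0 ≤ Q i j)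
    (hR0 : ∀ i k, 0 ≤ R i k) (hrow : ∀ i, ∑ j, Q i j + ∑ k, R i k = 1) {τ : ℕ} {ε : α}
    (hτ : ∀ i, ε ≤ ∑ k, (Q ^ τ * R) i k) (i : m) : ∑ j, (Q ^ (τ + 1)) i j + ε ≤ 1 := by
  have hQ1 (i : m) : ∑ j, Q i j ≤ 1 :=
    le_of_add_le_of_nonneg_left (hrow i).le (sum_nonneg fun k _ ↦ hR0 i k)
  calc ∑ j, (Q ^ (τ + 1)) i j + ε ≤ ∑ j, (Q ^ τ * Q) i j + ∑ k, (Q ^ τ * R) i k := by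
        rw [pow_succ]; gcongr; exact hτ i
    _ = ∑ k, (Q ^ τ) i k := sum_mul_add_sum_mul hrow _ i
    _ ≤ 1 := sum_pow_apply_le_one hQ0 hQ1 τ i

end Substochastic

section LinftyOp

attribute [local instance] Matrix.linftyOpSeminormedAddCommGroup Matrix.linftyOpNormedAddCommGroup
  Matrix.linftyOpNormedRing

theorem linfty_opNNNorm_lt_iff [SeminormedAddCommGroup α] [Fintype n] {r : ℝ≥0} (hr : 0 < r)
    {A : Matrix m n α} : ‖A‖₊ < r ↔ ∀ i, ∑ j, ‖A i j‖₊ < r := by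
  simp [linfty_opNNNorm_def, Finset.sup_lt_iff hr]

theorem linfty_opNNNorm_pow_succ_lt_one [DecidableEq m] [Fintype n] {Q : Matrix m m ℝ}
    {R : Matrix m n ℝ} (hQ0 : ∀ i j, 0 ≤ Q i j) (hR0 : ∀ i k, 0 ≤ R i k)
    (hrow : ∀ i, ∑ j, Q i j + ∑ k, R i k = 1) {τ : ℕ} {ε : ℝ} (hε : 0 < ε)
    (hτ : ∀ i, ε ≤ ∑ k, (Q ^ τ * R) i k) : ‖Q ^ (τ + 1)‖₊ < 1 := by
  refine (linfty_opNNNorm_lt_iff one_pos).2 fun i ↦ ?_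
  rw [← NNReal.coe_lt_coe, NNReal.coe_sum]
  simp only [coe_nnnorm, Real.norm_of_nonneg (pow_apply_nonneg hQ0 _ i _), NNReal.coe_one]
  linarith [sum_pow_succ_apply_add_le_one hQ0 hR0 hrow hτ i]

variable [DecidableEq m] [Fintype n] [NormedRing α] (Q : Matrix m m α) (R : Matrix m n α)

theorem lipschitzWith_iterate_mul_add (k : ℕ) :
    LipschitzWith ‖Q ^ k‖₊ (fun X : Matrix m n α ↦ Q * X + R)^[k] :=
  .of_dist_le_mul fun X Y ↦ by
    simpa only [dist_eq_norm, coe_nnnorm, iterate_mul_add_sub_iterate]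
      using linfty_opNorm_mul _ (X - Y)

theorem existsUnique_isFixedPt_mul_add [CompleteSpace α] {k : ℕ} (hQ : ‖Q ^ k‖₊ < 1) :
    ∃! P, IsFixedPt (fun X : Matrix m n α ↦ Q * X + R) P := by
  -- the ∞-operator norm induces the product uniformity, for which matrices are complete
  have : @CompleteSpace (Matrix m n α) PseudoEMetricSpace.toUniformSpace :=
    (inferInstance : @CompleteSpace (Matrix m n α) (Matrix.instUniformSpace m n α))
  have hF : ContractingWith ‖Q ^ k‖₊ (fun X : Matrix m n α ↦ Q * X + R)^[k] :=
    ⟨hQ, lipschitzWith_iterate_mul_add Q R k⟩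
  exact ⟨_, hF.isFixedPt_fixedPoint_iterate, fun X hX ↦ hF.fixedPoint_unique (hX.iterate k)⟩

theorem tendsto_iterate_mul_add {k : ℕ} (hk : k ≠ 0) (hQ : ‖Q ^ k‖₊ < 1) {P : Matrix m n α}
    (hP : IsFixedPt (fun X : Matrix m n α ↦ Q * X + R) P) (X : Matrix m n α) :
    Tendsto (fun i ↦ (fun X : Matrix m n α ↦ Q * X + R)^[i] X) atTop (𝓝 P) := by
  have hdiff (i : ℕ) : (fun X : Matrix m n α ↦ Q * X + R)^[i] X - P = Q ^ i * (X - P) := by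
    rw [← iterate_mul_add_sub_iterate Q R i X P, (hP.iterate i).eq]
  have hpow := tendsto_zero_iff_norm_tendsto_zero.1 <|
    tendsto_pow_atTop_nhds_zero_of_norm_pow_lt_one (a := Q) hk (mod_cast hQ)
  refine tendsto_iff_norm_sub_tendsto_zero.2 <| squeeze_zero (fun _ ↦ norm_nonneg _)
    (fun i ↦ hdiff i ▸ linfty_opNorm_mul _ _) (by simpa using hpow.mul_const ‖X - P‖)

end LinftyOp

end Matrix

theorem stmt2 (M K : ℕ) (Q : Matrix (Fin M) (Fin M) ℝ) (R : Matrix (Fin M) (Fin K) ℝ)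
    (hQ0 : ∀ i j, 0 ≤ Q i j) (hR0 : ∀ i k, 0 ≤ R i k)
    (hrow : ∀ i, (∑ j, Q i j) + (∑ k, R i k) = 1)
    (τ : ℕ) (ε : ℝ) (hε : 0 < ε)
    (hτ : ∀ i, ε ≤ ∑ k, |(Q ^ τ * R) i k|) :
    ∃ Pstar : Matrix (Fin M) (Fin K) ℝ,
      (Q * Pstar + R = Pstar) ∧
      (∀ P : Matrix (Fin M) (Fin K) ℝ, Q * P + R = P → P = Pstar) ∧
      (∀ P0 : Matrix (Fin M) (Fin K) ℝ,
        Filter.Tendsto (fun i => (fun X => Q * X + R)^[i] P0) Filter.atTop (nhds Pstar)) := by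
  have hτ' (i : Fin M) : ε ≤ ∑ k, (Q ^ τ * R) i k := by
    simpa only [abs_of_nonneg (mul_apply_nonneg (pow_apply_nonneg hQ0 τ) hR0 i _)] using hτ i
  have hQ := linfty_opNNNorm_pow_succ_lt_one hQ0 hR0 hrow hε hτ'
  obtain ⟨P, hP, huniq⟩ := existsUnique_isFixedPt_mul_add Q R hQ
  exact ⟨P, hP, huniq, tendsto_iterate_mul_add Q R τ.succ_ne_zero hQ hP⟩
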